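/- Let F be a field, U, V positive integers, R a positive integer, and h_{u,v} ∈ F^R for (u,v) ∈ [U]×[V] such that ∑_{(u,v)} h_{u,v} = 0 and every collection of at most R distinct vectors among {h_{u,v}} ∪ {∑_{v∈[V]} h_{u,v} : u ∈ [U]} is linearly independent. Fix k ∈ [U] and a set 𝒯 ⊆ [U]×[V] avoiding row k and one column, with the total count m := (U-1-|𝒰2|) + (V-|𝒯1|) - 1 + |𝒯| ≤ R, where 𝒯1 = 𝒯∩({k}×[V]) and 𝒰2 = {u : {u}×[V] ⊆ 𝒯}. Then the vector family consisting of {∑_{v} h_{u,v} : u ∈ [U]\({k}∪𝒰2)}, {h_{k,v} : v ∈ [V], (k,v) ∉ 𝒯1}, and {h_{u,v} : (u,v) ∈ 𝒯} spans a subspace of dimension exactly m, i.e., exactly one linear dependence (induced by the zero-sum constraint) holds among these m+1 vectors. -/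

import Mathlib

/-!
Because row `k` avoids `𝒯` and some column avoids `𝒯`, both `𝒯1` and `𝒰2` are empty and
`m = (U - 1) + (V - 1) + |𝒯|`. The zero-sum constraint expresses `h (k, v₀)` through the other
entries of row `k` and the other row sums, so dropping it leaves the span unchanged; the remaining
`m ≤ R` vectors are distinct members of the generic family, hence linearly independent.
-/

open Finset Submodule

section

variable {F M α β : Type*} [Field F] [AddCommGroup M] [Module F M]
  [Fintype α] [Fintype β] [DecidableEq α] [DecidableEq β]

lemma eq_neg_sum_erase_of_sum_eq_zero {h : α × β → M} (hsum : ∑ p, h p = 0) (k : α) (v₀ : β) :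
    h (k, v₀) = -(∑ v ∈ univ.erase v₀, h (k, v) + ∑ u ∈ univ.erase k, ∑ v, h (u, v)) := by
  rw [eq_neg_iff_add_eq_zero, ← add_assoc, add_sum_erase _ (fun v => h (k, v)) (mem_univ v₀),
    add_sum_erase _ (fun u => ∑ v, h (u, v)) (mem_univ k), ← Fintype.sum_prod_type, hsum]

/-- `inl p` stands for `h p` and `inr u` for the row sum of `u`. -/
def retainedIndices (k : α) (v₀ : β) (T : Finset (α × β)) : Finset ((α × β) ⊕ α) :=
  (T ∪ (univ.erase v₀).map ⟨Prod.mk k, Prod.mk_right_injective k⟩).disjSum (univ.erase k)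

lemma card_retainedIndices {k : α} {T : Finset (α × β)} (hrow : ∀ v, (k, v) ∉ T) (v₀ : β) :
    #(retainedIndices k v₀ T) = #T + (Fintype.card β - 1) + (Fintype.card α - 1) := by
  have hdisj : Disjoint T ((univ.erase v₀).map ⟨Prod.mk k, Prod.mk_right_injective k⟩) := by
    simp only [disjoint_right, mem_map, mem_erase]
    rintro _ ⟨v, -, rfl⟩
    exact hrow v
  rw [retainedIndices, card_disjSum, card_union_of_disjoint hdisj, card_map,
    card_erase_of_mem (mem_univ _), card_erase_of_mem (mem_univ _), card_univ, card_univ]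

lemma span_union_eq_span_retainedIndices {h : α × β → M} (hsum : ∑ p, h p = 0)
    (k : α) (v₀ : β) (T : Finset (α × β)) :
    span F ((fun u => ∑ v, h (u, v)) '' {u | u ≠ k} ∪ h '' {p | p.1 = k} ∪ h '' T) =
      span F (Sum.elim h (fun u => ∑ v, h (u, v)) '' retainedIndices k v₀ T) := by
  set S := Sum.elim h (fun u => ∑ v, h (u, v)) '' retainedIndices k v₀ T
  have hrowk : ∀ v, v ≠ v₀ → h (k, v) ∈ S := fun v hv =>
    ⟨.inl (k, v), by simp [retainedIndices, hv], rfl⟩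
  have hsums : ∀ u, u ≠ k → ∑ v, h (u, v) ∈ S := fun u hu =>
    ⟨.inr u, by simp [retainedIndices, hu], rfl⟩
  refine le_antisymm (span_le.mpr ?_) (span_mono ?_)
  · rintro _ ((⟨u, hu, rfl⟩ | ⟨⟨u, v⟩, rfl : u = k, rfl⟩) | ⟨p, hp, rfl⟩)
    · exact subset_span (hsums u hu)
    · by_cases hv : v = v₀
      · rw [hv, eq_neg_sum_erase_of_sum_eq_zero hsum]
        exact neg_mem (add_mem (sum_mem fun v hv => subset_span (hrowk v (ne_of_mem_erase hv)))
          (sum_mem fun u hu => subset_span (hsums u (ne_of_mem_erase hu))))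
      · exact subset_span (hrowk v hv)
    · exact subset_span ⟨.inl p, by simp [retainedIndices, mem_coe.mp hp], rfl⟩
  · rintro _ ⟨⟨u, v⟩ | u, hi, rfl⟩
    · simp only [retainedIndices, mem_coe, inl_mem_disjSum, mem_union, mem_map, mem_erase] at hi
      rcases hi with hi | ⟨w, -, hw⟩
      · exact Or.inr ⟨_, hi, rfl⟩
      · exact Or.inl (Or.inr ⟨_, congrArg Prod.fst hw.symm, rfl⟩)
    · simp only [retainedIndices, mem_coe, inr_mem_disjSum, mem_erase] at hi
      exact Or.inl (Or.inl ⟨u, hi.1, rfl⟩)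

end

theorem stmt_12_general {F : Type*} [Field F] (U V R : ℕ)
    (h : Fin U × Fin V → Fin R → F)
    (hsum : ∑ p : Fin U × Fin V, h p = 0)
    (hgen : ∀ s : Finset ((Fin U × Fin V) ⊕ Fin U), s.card ≤ R →
      LinearIndependent F
        (fun i : {x // x ∈ s} =>
          Sum.elim h (fun u : Fin U => ∑ v : Fin V, h (u, v)) i.1))
    (k : Fin U) (𝒯 : Finset (Fin U × Fin V))
    (hrow : ∀ v : Fin V, (k, v) ∉ 𝒯)
    (hcol : ∃ v' : Fin V, ∀ u : Fin U, (u, v') ∉ 𝒯) :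
    let 𝒯1 := 𝒯.filter (fun p => p.1 = k)
    let 𝒰2 := Finset.univ.filter (fun u : Fin U => ∀ v : Fin V, (u, v) ∈ 𝒯)
    let m := (U - 1 - 𝒰2.card) + (V - 𝒯1.card) - 1 + 𝒯.card
    m ≤ R →
      Module.finrank F (Submodule.span F
        (((fun u : Fin U => ∑ v : Fin V, h (u, v)) ''
            {u : Fin U | u ≠ k ∧ u ∉ 𝒰2}) ∪
          (h '' {p : Fin U × Fin V | p.1 = k ∧ p ∉ 𝒯1}) ∪
          (h '' ↑𝒯))) = m := by
  intro 𝒯1 𝒰2 m hmR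
  obtain ⟨v₀, hv₀⟩ := hcol
  have h𝒯1 : 𝒯1 = ∅ := filter_eq_empty_iff.mpr fun p hp hpk => hrow p.2 (hpk ▸ hp)
  have h𝒰2 : 𝒰2 = ∅ := filter_eq_empty_iff.mpr fun u _ hu => hv₀ u (hu v₀)
  have hcard : #(retainedIndices k v₀ 𝒯) = m := by
    simp only [m, h𝒯1, h𝒰2, card_empty, card_retainedIndices hrow, Fintype.card_fin]
    have := v₀.pos
    omega
  have hind := hgen _ (hcard ▸ hmR)
  have hrowSums : {u | u ≠ k ∧ u ∉ 𝒰2} = {u | u ≠ k} := by simp [h𝒰2]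
  have hrowK : {p : Fin U × Fin V | p.1 = k ∧ p ∉ 𝒯1} = {p | p.1 = k} := by simp [h𝒯1]
  rw [hrowSums, hrowK, span_union_eq_span_retainedIndices hsum k v₀, Set.image_eq_range]
  exact (finrank_span_eq_card hind).trans ((Fintype.card_coe _).trans hcard)

theorem stmt_12 {F : Type*} [Field F] (U V R : ℕ)
    (hU : 0 < U) (hV : 0 < V) (hR : 0 < R)
    (h : Fin U × Fin V → Fin R → F)
    (hsum : ∑ p : Fin U × Fin V, h p = 0)
    (hgen : ∀ s : Finset ((Fin U × Fin V) ⊕ Fin U), s.card ≤ R →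
      LinearIndependent F
        (fun i : {x // x ∈ s} =>
          Sum.elim h (fun u : Fin U => ∑ v : Fin V, h (u, v)) i.1))
    (k : Fin U) (𝒯 : Finset (Fin U × Fin V))
    (hrow : ∀ v : Fin V, (k, v) ∉ 𝒯)
    (hcol : ∃ v' : Fin V, ∀ u : Fin U, (u, v') ∉ 𝒯) :
    let 𝒯1 := 𝒯.filter (fun p => p.1 = k)
    let 𝒰2 := Finset.univ.filter (fun u : Fin U => ∀ v : Fin V, (u, v) ∈ 𝒯)
    let m := (U - 1 - 𝒰2.card) + (V - 𝒯1.card) - 1 + 𝒯.card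
    m ≤ R →
      Module.finrank F (Submodule.span F
        (((fun u : Fin U => ∑ v : Fin V, h (u, v)) ''
            {u : Fin U | u ≠ k ∧ u ∉ 𝒰2}) ∪
          (h '' {p : Fin U × Fin V | p.1 = k ∧ p ∉ 𝒯1}) ∪
          (h '' ↑𝒯))) = m :=
  stmt_12_general U V R h hsum hgen k 𝒯 hrow hcol
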